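/- arXiv:math/0311219 — 2 statements merged into one kernel-verified Lean document; each statement's English description precedes it below -/
import Mathlib

section
/- (Cotlar–Stein lemma, as used in the paper.) Let H be a complex Hilbert space, r ∈ ℕ, and let {T_j}_{j∈ℤ^r} be a family of bounded linear operators on H. Suppose there are nonnegative numbers {γ(j)}_{j∈ℤ^r} such that ‖T_i^* T_j‖ ≤ γ(i−j)² and ‖T_i T_j^*‖ ≤ γ(i−j)² for all i, j ∈ ℤ^r, and M := Σ_{j∈ℤ^r} γ(j) < ∞. Then for every finite subset F ⊂ ℤ^r, the operator T_F := Σ_{j∈F} T_j satisfies ‖T_F‖ ≤ M. -/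
open Filter Topology

/-!
Cotlar–Stein via the C⋆-identity: with `S = ∑ T j`, `‖S‖ ^ (2 ^ (m + 1)) = ‖(S⋆ S) ^ (2 ^ m)‖`,
and expanding the power gives a sum over words `j₁ ⋯ jₙ` of alternating products
`T_{j₁}⋆ T_{j₂} T_{j₃}⋆ ⋯`. Bracketing such a product into pairs starting at the first letter,
or at the second one, bounds it in two ways; the geometric mean of the two bounds is
`c · ∏ d(jₖ, jₖ₊₁)`, where `c` bounds every `‖T j‖`. Summing over the word one letter at a time
against the row bound `∑_b d(a, b) ≤ M` gives `‖S‖ ^ n ≤ C · M ^ (n - 1)` along `n = 2 ^ (m + 1)`,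
and taking `n`-th roots yields `‖S‖ ≤ M`.
-/

lemma Fintype.sum_pi_fin_succ {ι β : Type*} [Fintype ι] [AddCommMonoid β] (n : ℕ)
    (g : (Fin (n + 1) → ι) → β) : ∑ f, g f = ∑ j, ∑ f : Fin n → ι, g (Fin.cons j f) := by
  rw [← (Fin.consEquiv fun _ => ι).sum_comp, Fintype.sum_prod_type]
  rfl

lemma le_of_frequently_pow_succ_le_mul_pow {x M C : ℝ} (hM : 0 ≤ M)
    (h : ∃ᶠ n in atTop, x ^ (n + 1) ≤ C * M ^ n) : x ≤ M := by
  by_contra! hMx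
  have hx : 0 < x := hM.trans_lt hMx
  have hlim : Tendsto (fun n => C * (M / x) ^ n) atTop (𝓝 0) := by
    simpa using (tendsto_pow_atTop_nhds_zero_of_lt_one (div_nonneg hM hx.le)
      ((div_lt_one hx).2 hMx)).const_mul C
  obtain ⟨n, hn, hsmall⟩ := (h.and_eventually (hlim.eventually (gt_mem_nhds hx))).exists
  rw [div_pow, mul_div_assoc', div_lt_iff₀ (pow_pos hx n)] at hsmall
  linarith [pow_succ' x n, hn]

namespace CotlarStein

variable {A : Type*} [NormedRing A] [StarRing A] {ι : Type*}

def starIf (b : Bool) (x : A) : A := if b then star x else x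

lemma starIf_sum (b : Bool) (s : Finset ι) (T : ι → A) :
    starIf b (∑ j ∈ s, T j) = ∑ j ∈ s, starIf b (T j) := by
  cases b <;> simp [starIf, star_sum]

def altProd (T : ι → A) : Bool → List ι → A
  | _, [] => 1
  | b, j :: l => starIf b (T j) * altProd T (!b) l

lemma altProd_replicate_two_mul (x : A) :
    ∀ m : ℕ, altProd id true (List.replicate (2 * m) x) = (star x * x) ^ m
  | 0 => by simp [altProd]
  | m + 1 => by
    rw [Nat.mul_succ, pow_succ', ← altProd_replicate_two_mul x m]
    simp only [List.replicate_succ, altProd, starIf, id, Bool.not_true, Bool.not_false, mul_assoc]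
    rfl

lemma altProd_replicate_sum [Fintype ι] (T : ι → A) :
    ∀ (n : ℕ) (b : Bool), altProd id b (List.replicate n (∑ j, T j))
      = ∑ f : Fin n → ι, altProd T b (List.ofFn f)
  | 0, b => by simp [altProd]
  | n + 1, b => by
    simp only [Fintype.sum_pi_fin_succ, List.replicate_succ, altProd, id, starIf_sum,
      altProd_replicate_sum T n, Finset.sum_mul_sum, List.ofFn_cons]

lemma norm_starIf_mul_starIf_le {T : ι → A} {d : ι → ι → ℝ}
    (h₁ : ∀ a b, ‖star (T a) * T b‖ ≤ d a b ^ 2) (h₂ : ∀ a b, ‖T a * star (T b)‖ ≤ d a b ^ 2)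
    (b : Bool) (a a' : ι) : ‖starIf b (T a) * starIf (!b) (T a')‖ ≤ d a a' ^ 2 := by
  cases b
  · simpa [starIf] using h₂ a a'
  · simpa [starIf] using h₁ a a'

/-- The bound on a word obtained by bracketing it into consecutive pairs from the left,
a leftover last letter being bounded by `c`. -/
def pairedBound (c : ℝ) (d : ι → ι → ℝ) : List ι → ℝ
  | [] => 1
  | [_] => c
  | a :: b :: l => d a b ^ 2 * pairedBound c d l

def chainProd (d : ι → ι → ℝ) : List ι → ℝ
  | [] => 1
  | [_] => 1
  | a :: b :: l => d a b * chainProd d (b :: l)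

lemma chainProd_nonneg {d : ι → ι → ℝ} (hd : ∀ a b, 0 ≤ d a b) : ∀ l, 0 ≤ chainProd d l
  | [] => zero_le_one
  | [_] => zero_le_one
  | a :: b :: l => mul_nonneg (hd a b) (chainProd_nonneg hd (b :: l))

lemma pairedBound_cons_mul (c : ℝ) (d : ι → ι → ℝ) :
    ∀ (l : List ι) (a : ι),
      pairedBound c d (a :: l) * (c * pairedBound c d l) = (c * chainProd d (a :: l)) ^ 2
  | [], a => by simp [pairedBound, chainProd]; ring
  | [b], a => by simp [pairedBound, chainProd]; ring
  | b :: b' :: l, a => by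
    have ih := pairedBound_cons_mul c d l b'
    simp only [pairedBound, chainProd] at ih ⊢
    linear_combination (d a b ^ 2 * d b b' ^ 2) * ih

variable [CStarRing A]

lemma norm_one_le_one : ‖(1 : A)‖ ≤ 1 := by
  rcases subsingleton_or_nontrivial A with _ | _
  · simp [Subsingleton.elim (1 : A) 0]
  · exact CStarRing.norm_one.le

lemma norm_starIf (b : Bool) (x : A) : ‖starIf b x‖ = ‖x‖ := by
  cases b <;> simp [starIf]

section Bounds

variable {T : ι → A} {c : ℝ} {d : ι → ι → ℝ}
  (hT : ∀ j, ‖T j‖ ≤ c)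
  (h₁ : ∀ a b, ‖star (T a) * T b‖ ≤ d a b ^ 2)
  (h₂ : ∀ a b, ‖T a * star (T b)‖ ≤ d a b ^ 2)
include hT h₁ h₂

lemma norm_altProd_le_pairedBound :
    ∀ (b : Bool) (l : List ι), ‖altProd T b l‖ ≤ pairedBound c d l
  | _, [] => norm_one_le_one
  | b, [a] => by simpa [altProd, pairedBound, norm_starIf] using hT a
  | b, a :: a' :: l => calc
      ‖altProd T b (a :: a' :: l)‖
          = ‖starIf b (T a) * starIf (!b) (T a') * altProd T b l‖ := by
        simp only [altProd, Bool.not_not, mul_assoc]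
      _ ≤ ‖starIf b (T a) * starIf (!b) (T a')‖ * ‖altProd T b l‖ := norm_mul_le _ _
      _ ≤ d a a' ^ 2 * pairedBound c d l :=
        mul_le_mul (norm_starIf_mul_starIf_le h₁ h₂ b a a')
          (norm_altProd_le_pairedBound b l) (norm_nonneg _) (sq_nonneg _)

/-- The geometric mean of the bounds from pairing at the first and at the second letter. -/
lemma norm_altProd_cons_le (hd : ∀ a b, 0 ≤ d a b) (b : Bool) (a : ι) (l : List ι) :
    ‖altProd T b (a :: l)‖ ≤ c * chainProd d (a :: l) := by
  have hc : 0 ≤ c := (norm_nonneg _).trans (hT a)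
  have hfirst : ‖altProd T b (a :: l)‖ ≤ pairedBound c d (a :: l) :=
    norm_altProd_le_pairedBound hT h₁ h₂ b (a :: l)
  have hsecond : ‖altProd T b (a :: l)‖ ≤ c * pairedBound c d l :=
    (norm_mul_le _ _).trans <| mul_le_mul ((norm_starIf b _).trans_le (hT a))
      (norm_altProd_le_pairedBound hT h₁ h₂ _ l) (norm_nonneg _) hc
  refine (pow_le_pow_iff_left₀ (norm_nonneg _) (mul_nonneg hc (chainProd_nonneg hd _))
    two_ne_zero).1 ?_
  rw [← pairedBound_cons_mul, sq]
  exact mul_le_mul hfirst hsecond (norm_nonneg _) ((norm_nonneg _).trans hfirst)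

end Bounds

lemma sum_chainProd_cons_le [Fintype ι] {d : ι → ι → ℝ} {M : ℝ} (hd : ∀ a b, 0 ≤ d a b)
    (hM : 0 ≤ M) (hrow : ∀ a, ∑ b, d a b ≤ M) :
    ∀ (n : ℕ) (a : ι), ∑ f : Fin n → ι, chainProd d (a :: List.ofFn f) ≤ M ^ n
  | 0, a => by simp [chainProd]
  | n + 1, a => calc
      ∑ f : Fin (n + 1) → ι, chainProd d (a :: List.ofFn f)
          = ∑ j, d a j * ∑ f : Fin n → ι, chainProd d (j :: List.ofFn f) := by
        simp only [Fintype.sum_pi_fin_succ, List.ofFn_cons, chainProd, Finset.mul_sum]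
      _ ≤ ∑ j, d a j * M ^ n := by
        gcongr with j
        · exact hd a j
        · exact sum_chainProd_cons_le hd hM hrow n j
      _ = (∑ j, d a j) * M ^ n := (Finset.sum_mul _ _ _).symm
      _ ≤ M ^ (n + 1) := by
        rw [pow_succ']
        exact mul_le_mul_of_nonneg_right (hrow a) (pow_nonneg hM n)

lemma norm_altProd_replicate_sum_le [Fintype ι] {T : ι → A} {c M : ℝ} {d : ι → ι → ℝ}
    (hT : ∀ j, ‖T j‖ ≤ c) (hd : ∀ a b, 0 ≤ d a b) (hM : 0 ≤ M) (hrow : ∀ a, ∑ b, d a b ≤ M)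
    (h₁ : ∀ a b, ‖star (T a) * T b‖ ≤ d a b ^ 2) (h₂ : ∀ a b, ‖T a * star (T b)‖ ≤ d a b ^ 2)
    (b : Bool) (n : ℕ) :
    ‖altProd id b (List.replicate (n + 1) (∑ j, T j))‖ ≤ Fintype.card ι * c * M ^ n := by
  rw [altProd_replicate_sum, Fintype.sum_pi_fin_succ]
  calc ‖∑ j, ∑ f : Fin n → ι, altProd T b (List.ofFn (Fin.cons j f))‖
      ≤ ∑ j, ∑ f : Fin n → ι, ‖altProd T b (List.ofFn (Fin.cons j f))‖ :=
        (norm_sum_le _ _).trans (Finset.sum_le_sum fun j _ => norm_sum_le _ _)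
    _ ≤ ∑ j, c * ∑ f : Fin n → ι, chainProd d (j :: List.ofFn f) := by
      gcongr with j
      rw [Finset.mul_sum]
      gcongr with f
      rw [List.ofFn_cons]
      exact norm_altProd_cons_le hT h₁ h₂ hd b j _
    _ ≤ ∑ _j : ι, c * M ^ n := by
      gcongr with j
      · exact (norm_nonneg _).trans (hT j)
      · exact sum_chainProd_cons_le hd hM hrow n j
    _ = Fintype.card ι * c * M ^ n := by simp [mul_assoc]

end CotlarStein

open CotlarStein in
theorem CStarRing.norm_sum_le_of_cotlarStein {A ι : Type*} [NormedRing A] [StarRing A]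
    [CStarRing A] [Fintype ι] {T : ι → A} {d : ι → ι → ℝ} {M : ℝ} (hd : ∀ a b, 0 ≤ d a b)
    (hM : 0 ≤ M) (hrow : ∀ a, ∑ b, d a b ≤ M)
    (h₁ : ∀ a b, ‖star (T a) * T b‖ ≤ d a b ^ 2) (h₂ : ∀ a b, ‖T a * star (T b)‖ ≤ d a b ^ 2) :
    ‖∑ j, T j‖ ≤ M := by
  set S := ∑ j, T j
  have hT : ∀ j, ‖T j‖ ≤ ∑ i, ‖T i‖ := fun j =>
    Finset.single_le_sum (fun i _ => norm_nonneg (T i)) (Finset.mem_univ j)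
  have hpow : ∀ m, ‖S‖ ^ 2 ^ (m + 1) = ‖altProd id true (List.replicate (2 ^ (m + 1)) S)‖ := by
    intro m
    rw [pow_succ', altProd_replicate_two_mul, (IsSelfAdjoint.star_mul_self S).norm_pow_two_pow,
      CStarRing.norm_star_mul_self, ← sq, ← pow_mul]
  refine le_of_frequently_pow_succ_le_mul_pow (C := Fintype.card ι * ∑ i, ‖T i‖) hM
    (frequently_atTop.2 fun N => ?_)
  obtain ⟨n, hn⟩ : ∃ n, n + 1 = 2 ^ (N + 1) := ⟨_, Nat.sub_add_cancel Nat.one_le_two_pow⟩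
  refine ⟨n, by have := Nat.lt_two_pow_self (n := N + 1); omega, ?_⟩
  rw [hn, hpow, ← hn]
  exact norm_altProd_replicate_sum_le hT hd hM hrow h₁ h₂ true n

/-- **Cotlar–Stein lemma.** If a family `{T_j}_{j ∈ ℤ^r}` of bounded
operators on a complex Hilbert space satisfies `‖T_i^* T_j‖ ≤ γ(i-j)²` and
`‖T_i T_j^*‖ ≤ γ(i-j)²` with `M = Σ γ(j) < ∞`, then every finite sum `Σ_{j ∈ F} T_j`
has operator norm at most `M`. -/
theorem statement1 {H : Type*} [NormedAddCommGroup H] [InnerProductSpace ℂ H]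
    [CompleteSpace H] (r : ℕ) (T : (Fin r → ℤ) → H →L[ℂ] H) (γ : (Fin r → ℤ) → ℝ)
    (hγ : ∀ j, 0 ≤ γ j)
    (h₁ : ∀ i j, ‖(ContinuousLinearMap.adjoint (T i)).comp (T j)‖ ≤ (γ (i - j)) ^ 2)
    (h₂ : ∀ i j, ‖(T i).comp (ContinuousLinearMap.adjoint (T j))‖ ≤ (γ (i - j)) ^ 2)
    (hsum : Summable γ) :
    ∀ F : Finset (Fin r → ℤ), ‖∑ j ∈ F, T j‖ ≤ ∑' j, γ j := by
  intro F
  rw [← Finset.sum_coe_sort F T]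
  refine CStarRing.norm_sum_le_of_cotlarStein (d := fun a b : F => γ (a - b))
    (fun _ _ => hγ _) (tsum_nonneg hγ) (fun a => ?_) (fun a b => h₁ a b) (fun a b => h₂ a b)
  calc ∑ b : F, γ (a - b) = ∑ b ∈ F, γ (a - b) := Finset.sum_coe_sort F fun b => γ (a - b)
    _ ≤ ∑' b, γ (a - b) :=
      ((Equiv.subLeft (a : Fin r → ℤ)).summable_iff.2 hsum).sum_le_tsum F fun _ _ => hγ _
    _ = ∑' j, γ j := (Equiv.subLeft _).tsum_eq γ
end

section
/- Let φ ∈ C^∞(ℝ^n_y × ℝ^n_ξ) be real-valued with: |det ∂_y∂_ξ φ(y,ξ)| ≥ C₀ > 0 for all (y,ξ); |∂_y^α ∂_ξ^β φ(y,ξ)| ≤ C_{αβ} for all |α| ≥ 1, |β| ≥ 1; and |∂_ξ^β φ(y,ξ)| ≤ C_β ⟨y⟩ for all |β| ≥ 1. Then there exist constants C₁, C₂ > 0 such that C₁ ⟨y⟩ ≤ ⟨∂_ξ φ(y,ξ)⟩ ≤ C₂ ⟨y⟩ for all (y,ξ) ∈ ℝ^n × ℝ^n. -/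
open MeasureTheory Complex SchwartzMap
open scoped BigOperators ENNReal Real RealInnerProductSpace

noncomputable section

/-- The derivative of `g` along the direction `v`. -/
def dLine {W F : Type*} [NormedAddCommGroup W] [NormedSpace ℝ W]
    [NormedAddCommGroup F] [NormedSpace ℝ F] (v : W) (g : W → F) : W → F :=
  fun z => fderiv ℝ g z v

/-- The iterated partial derivative `∂^α` along the coordinate directions `dirs`,
with multiplicities given by the multi-index `α`. -/
def mderiv {n : ℕ} {W F : Type*} [NormedAddCommGroup W] [NormedSpace ℝ W]
    [NormedAddCommGroup F] [NormedSpace ℝ F]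
    (dirs : Fin n → W) (α : Fin n → ℕ) (g : W → F) : W → F :=
  ((List.ofFn fun i => (dLine (dirs i) (F := F))^[α i]).foldr (· ∘ ·) id) g

/-- The length `|α|` of a multi-index. -/
def mdeg {n : ℕ} (α : Fin n → ℕ) : ℕ := ∑ i, α i

/-- The first-factor coordinate directions in `ℝ^n × ℝ^n`. -/
def dX {n : ℕ} (i : Fin n) : EuclideanSpace ℝ (Fin n) × EuclideanSpace ℝ (Fin n) :=
  (EuclideanSpace.single i 1, 0)

/-- The second-factor coordinate directions in `ℝ^n × ℝ^n`. -/
def dY {n : ℕ} (j : Fin n) : EuclideanSpace ℝ (Fin n) × EuclideanSpace ℝ (Fin n) :=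
  (0, EuclideanSpace.single j 1)

/-- The entry `∂²φ/∂u_i∂v_j` of the mixed Hessian of a function of two `ℝ^n` variables. -/
def mixedHessXY {n : ℕ}
    (φ : EuclideanSpace ℝ (Fin n) × EuclideanSpace ℝ (Fin n) → ℝ) (i j : Fin n) :
    EuclideanSpace ℝ (Fin n) × EuclideanSpace ℝ (Fin n) → ℝ :=
  dLine (dX i) (dLine (dY j) φ)

/-- The Japanese bracket `⟨x⟩ = (1+|x|²)^{1/2}`. -/
def jap {n : ℕ} (x : EuclideanSpace ℝ (Fin n)) : ℝ := Real.sqrt (1 + ‖x‖ ^ 2)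

/-- The `x`-coordinate directions in `ℝ^n × ℝ^n × ℝ^n`. -/
def d3X {n : ℕ} (i : Fin n) :
    EuclideanSpace ℝ (Fin n) × EuclideanSpace ℝ (Fin n) × EuclideanSpace ℝ (Fin n) :=
  (EuclideanSpace.single i 1, 0, 0)

/-- The `y`-coordinate directions in `ℝ^n × ℝ^n × ℝ^n`. -/
def d3Y {n : ℕ} (j : Fin n) :
    EuclideanSpace ℝ (Fin n) × EuclideanSpace ℝ (Fin n) × EuclideanSpace ℝ (Fin n) :=
  (0, EuclideanSpace.single j 1, 0)

/-- The `ξ`-coordinate directions in `ℝ^n × ℝ^n × ℝ^n`. -/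
def d3Xi {n : ℕ} (k : Fin n) :
    EuclideanSpace ℝ (Fin n) × EuclideanSpace ℝ (Fin n) × EuclideanSpace ℝ (Fin n) :=
  (0, 0, EuclideanSpace.single k 1)


/- ===== auxiliary machinery ===== -/

section AuxMachinery

open Set Metric Matrix

lemma foldr_ofFn_id_aux {β : Type*} {m : ℕ} (fs : Fin m → β → β) (h : ∀ i, fs i = id) :
    (List.ofFn fs).foldr (· ∘ ·) id = id := by
  induction m with
  | zero => simp
  | succ m ih =>
    rw [List.ofFn_succ, List.foldr_cons, ih _ (fun i => h i.succ), h 0]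
    rfl

lemma foldr_ofFn_single_aux {β : Type*} {m : ℕ} (fs : Fin m → β → β) (j : Fin m)
    (h : ∀ i, i ≠ j → fs i = id) : (List.ofFn fs).foldr (· ∘ ·) id = fs j := by
  induction m with
  | zero => exact absurd j.2 (by simp)
  | succ m ih =>
    rw [List.ofFn_succ, List.foldr_cons]
    cases j using Fin.cases with
    | zero =>
      rw [foldr_ofFn_id_aux _ (fun i => h i.succ (Fin.succ_ne_zero i))]
      rfl
    | succ j' =>
      rw [h 0 (Fin.succ_ne_zero j').symm, ih _ j'
        (fun i hi => h i.succ (by simpa using hi))]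
      rfl

lemma mderiv_single {n : ℕ} {W F : Type*} [NormedAddCommGroup W] [NormedSpace ℝ W]
    [NormedAddCommGroup F] [NormedSpace ℝ F]
    (dirs : Fin n → W) (j : Fin n) (g : W → F) :
    mderiv dirs (Pi.single j 1) g = dLine (dirs j) g := by
  unfold mderiv
  rw [foldr_ofFn_single_aux _ j (fun i hi => by rw [Pi.single_eq_of_ne hi]; rfl),
    Pi.single_eq_same, Function.iterate_one]

lemma mdeg_single {n : ℕ} (j : Fin n) : mdeg (Pi.single j (1:ℕ)) = 1 := by
  simp [mdeg, Finset.sum_pi_single']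

lemma contDiff_dLine {W F : Type*} [NormedAddCommGroup W] [NormedSpace ℝ W]
    [NormedAddCommGroup F] [NormedSpace ℝ F] {f : W → F} (hf : ContDiff ℝ (⊤:ℕ∞) f) (v : W) :
    ContDiff ℝ (⊤:ℕ∞) (dLine v f) := by
  have h1 : ContDiff ℝ (⊤:ℕ∞) (fderiv ℝ f) := hf.fderiv_right (by
    rw [show ((⊤:ℕ∞) : WithTop ℕ∞) + 1 = ((⊤:ℕ∞) : WithTop ℕ∞) by rfl])
  exact h1.clm_apply contDiff_const

lemma one_le_inftop : (1 : WithTop ℕ∞) ≤ ((⊤:ℕ∞) : WithTop ℕ∞) := by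
  exact_mod_cast le_top

/- determinant/adjugate/inverse smoothness and bounds -/

lemma contDiff_det_aux {Z : Type*} [NormedAddCommGroup Z] [NormedSpace ℝ Z] {m : ℕ}
    {M : Z → Matrix (Fin m) (Fin m) ℝ} (h : ∀ i j, ContDiff ℝ (⊤:ℕ∞) fun z => M z i j) :
    ContDiff ℝ (⊤:ℕ∞) fun z => (M z).det := by
  have : (fun z => (M z).det)
      = fun z => ∑ σ : Equiv.Perm (Fin m),
          ((Equiv.Perm.sign σ : ℤ) : ℝ) * ∏ i, M z (σ i) i := by
    funext z; rw [Matrix.det_apply']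
  rw [this]
  exact ContDiff.sum fun σ _ => contDiff_const.mul (contDiff_prod fun i _ => h _ _)

lemma det_abs_le_aux {m : ℕ} (M : Matrix (Fin m) (Fin m) ℝ) {c : ℝ} (hc : 0 ≤ c)
    (h : ∀ i j, |M i j| ≤ c) : |M.det| ≤ Nat.factorial m * c ^ m := by
  rw [Matrix.det_apply']
  calc |∑ σ : Equiv.Perm (Fin m), ((Equiv.Perm.sign σ : ℤ) : ℝ) * ∏ i, M (σ i) i|
      ≤ ∑ σ : Equiv.Perm (Fin m), |((Equiv.Perm.sign σ : ℤ) : ℝ) * ∏ i, M (σ i) i| :=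
        Finset.abs_sum_le_sum_abs _ _
    _ ≤ ∑ _σ : Equiv.Perm (Fin m), c ^ m := by
        refine Finset.sum_le_sum fun σ _ => ?_
        rw [abs_mul]
        have hsign : |((Equiv.Perm.sign σ : ℤ) : ℝ)| = 1 := by
          rcases Int.units_eq_one_or (Equiv.Perm.sign σ) with h1 | h1 <;> simp [h1]
        rw [hsign, one_mul, Finset.abs_prod]
        calc ∏ i, |M (σ i) i| ≤ ∏ _i : Fin m, c := Finset.prod_le_prod
              (fun i _ => abs_nonneg _) (fun i _ => h _ _)
          _ = c ^ m := by simp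
    _ = Nat.factorial m * c ^ m := by
        simp [Finset.sum_const, Finset.card_univ, Fintype.card_perm]

lemma contDiff_adjugate_aux {Z : Type*} [NormedAddCommGroup Z] [NormedSpace ℝ Z] {m : ℕ}
    {M : Z → Matrix (Fin m) (Fin m) ℝ} (h : ∀ i j, ContDiff ℝ (⊤:ℕ∞) fun z => M z i j)
    (i j : Fin m) : ContDiff ℝ (⊤:ℕ∞) fun z => (M z).adjugate i j := by
  have : (fun z => (M z).adjugate i j)
      = fun z => ((M z).updateRow j (Pi.single i 1)).det := by
    funext z; rw [Matrix.adjugate_apply]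
  rw [this]
  refine contDiff_det_aux fun i' j' => ?_
  by_cases hij : i' = j
  · subst hij; simp only [Matrix.updateRow_self]; exact contDiff_const
  · simp only [Matrix.updateRow_ne hij]; exact h _ _

lemma adjugate_abs_le_aux {m : ℕ} (M : Matrix (Fin m) (Fin m) ℝ) {c : ℝ} (hc : 1 ≤ c)
    (h : ∀ i j, |M i j| ≤ c) (i j : Fin m) : |M.adjugate i j| ≤ Nat.factorial m * c ^ m := by
  rw [Matrix.adjugate_apply]
  refine det_abs_le_aux _ (le_trans zero_le_one hc) fun i' j' => ?_
  by_cases hij : i' = j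
  · subst hij
    rw [Matrix.updateRow_self]
    by_cases hj : j' = i
    · rw [hj, Pi.single_eq_same]; simpa using hc
    · simp [Pi.single_eq_of_ne hj, le_trans zero_le_one hc]
  · rw [Matrix.updateRow_ne hij]; exact h _ _

lemma contDiff_inv_entry_aux {Z : Type*} [NormedAddCommGroup Z] [NormedSpace ℝ Z] {m : ℕ}
    {M : Z → Matrix (Fin m) (Fin m) ℝ} (h : ∀ i j, ContDiff ℝ (⊤:ℕ∞) fun z => M z i j)
    (hdet : ∀ z, (M z).det ≠ 0) (i j : Fin m) :
    ContDiff ℝ (⊤:ℕ∞) fun z => (M z)⁻¹ i j := by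
  have : (fun z => (M z)⁻¹ i j) = fun z => ((M z).det)⁻¹ * (M z).adjugate i j := by
    funext z
    rw [Matrix.inv_def, Matrix.smul_apply, Ring.inverse_eq_inv', smul_eq_mul]
  rw [this]
  exact ((contDiff_det_aux h).inv hdet).mul (contDiff_adjugate_aux h i j)

lemma inv_entry_abs_le_aux {m : ℕ} (M : Matrix (Fin m) (Fin m) ℝ) {c C₀ : ℝ} (hc : 1 ≤ c)
    (hC₀ : 0 < C₀) (hdet : C₀ ≤ |M.det|) (h : ∀ i j, |M i j| ≤ c) (i j : Fin m) :
    |M⁻¹ i j| ≤ C₀⁻¹ * (Nat.factorial m * c ^ m) := by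
  rw [Matrix.inv_def, Matrix.smul_apply, Ring.inverse_eq_inv', smul_eq_mul, abs_mul, abs_inv]
  have h1 : |M.det|⁻¹ ≤ C₀⁻¹ := inv_anti₀ hC₀ hdet
  exact mul_le_mul h1 (adjugate_abs_le_aux M hc h i j) (abs_nonneg _) (inv_nonneg.2 hC₀.le)

lemma vecMul_inv_vecMul_aux {m : ℕ} (M : Matrix (Fin m) (Fin m) ℝ) (h : IsUnit M.det)
    (w : Fin m → ℝ) (j : Fin m) : ∑ i, (∑ k, w k * M⁻¹ k i) * M i j = w j := by
  have h1 : ∑ i, (∑ k, w k * M⁻¹ k i) * M i j = ∑ k, w k * ((M⁻¹ * M) k j) := by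
    simp_rw [Matrix.mul_apply, Finset.mul_sum, Finset.sum_mul]
    rw [Finset.sum_comm]
    refine Finset.sum_congr rfl fun k _ => Finset.sum_congr rfl fun i _ => by ring
  rw [h1, Matrix.nonsing_inv_mul M h]
  simp [Matrix.one_apply]

lemma vecMul_vecMul_inv_aux {m : ℕ} (M : Matrix (Fin m) (Fin m) ℝ) (h : IsUnit M.det)
    (w : Fin m → ℝ) (j : Fin m) : ∑ i, (∑ k, w k * M k i) * M⁻¹ i j = w j := by
  have h1 : ∑ i, (∑ k, w k * M k i) * M⁻¹ i j = ∑ k, w k * ((M * M⁻¹) k j) := by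
    simp_rw [Matrix.mul_apply, Finset.mul_sum, Finset.sum_mul]
    rw [Finset.sum_comm]
    refine Finset.sum_congr rfl fun k _ => Finset.sum_congr rfl fun i _ => by ring
  rw [h1, Matrix.mul_nonsing_inv M h]
  simp [Matrix.one_apply]

/- Euclidean helpers -/

lemma euclid_abs_coord_le {n : ℕ} (x : EuclideanSpace ℝ (Fin n)) (i : Fin n) : |x i| ≤ ‖x‖ := by
  rw [EuclideanSpace.norm_eq, ← Real.sqrt_sq_eq_abs]
  apply Real.sqrt_le_sqrt
  refine Finset.single_le_sum (f := fun j => ‖x j‖^2) (fun j _ => by positivity)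
    (Finset.mem_univ i) |>.trans_eq' ?_
  rw [Real.norm_eq_abs, _root_.sq_abs]

lemma euclid_norm_le_of_coord_le {n : ℕ} (x : EuclideanSpace ℝ (Fin n)) {c : ℝ} (hc : 0 ≤ c)
    (h : ∀ i, |x i| ≤ c) : ‖x‖ ≤ n * c := by
  rw [EuclideanSpace.norm_eq]
  have h1 : ∑ j, ‖x j‖^2 ≤ ∑ _j : Fin n, c^2 := by
    refine Finset.sum_le_sum fun j _ => ?_
    rw [Real.norm_eq_abs]
    exact pow_le_pow_left₀ (abs_nonneg _) (h j) 2
  refine (Real.sqrt_le_sqrt h1).trans ?_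
  rw [Finset.sum_const, Finset.card_univ, Fintype.card_fin, nsmul_eq_mul]
  calc Real.sqrt (n * c^2) ≤ Real.sqrt ((n*c)^2) := by
        apply Real.sqrt_le_sqrt
        rw [mul_pow]
        have h2 : (n:ℝ) ≤ (n:ℝ)^2 := by
          rcases Nat.eq_zero_or_pos n with h0 | h0
          · simp [h0]
          · have h1' : (1:ℝ) ≤ (n:ℝ) := by exact_mod_cast h0
            nlinarith
        nlinarith [sq_nonneg c]
    _ = |(n:ℝ)*c| := Real.sqrt_sq_eq_abs _
    _ = (n:ℝ)*c := abs_of_nonneg (by positivity)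

lemma hasDerivWithinAt_Ici_of_Icc {F : Type*} [NormedAddCommGroup F] [NormedSpace ℝ F]
    {f : ℝ → F} {f' : F} {t a b : ℝ} (ht : t ∈ Set.Ico a b)
    (h : HasDerivWithinAt f f' (Set.Icc a b) t) : HasDerivWithinAt f f' (Set.Ici t) t :=
  h.mono_of_mem_nhdsWithin (Icc_mem_nhdsGE_of_mem ht)

def toE {n : ℕ} (f : Fin n → ℝ) : EuclideanSpace ℝ (Fin n) := (WithLp.equiv 2 _).symm f

@[simp] lemma toE_apply {n : ℕ} (f : Fin n → ℝ) (j : Fin n) : toE f j = f j := rfl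

lemma euclid_prod_decomp {n : ℕ} (v : EuclideanSpace ℝ (Fin n)) :
    ((v, (0 : EuclideanSpace ℝ (Fin n))) :
      EuclideanSpace ℝ (Fin n) × EuclideanSpace ℝ (Fin n)) = ∑ i, v i • dX i := by
  have h1 : ∑ i, v i • EuclideanSpace.single i (1:ℝ) = v := by
    have hb := (EuclideanSpace.basisFun (Fin n) ℝ).sum_repr v
    simpa [EuclideanSpace.basisFun_apply, EuclideanSpace.basisFun_repr] using hb
  refine Prod.ext ?_ ?_
  · rw [Prod.fst_sum]
    simp only [dX, Prod.smul_mk]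
    exact h1.symm
  · rw [Prod.snd_sum]
    simp [dX]

lemma clm_prod_eval {n : ℕ}
    (T : (EuclideanSpace ℝ (Fin n) × EuclideanSpace ℝ (Fin n)) →L[ℝ] ℝ)
    (v : EuclideanSpace ℝ (Fin n)) : T (v, 0) = ∑ i, v i * T (dX i) := by
  rw [euclid_prod_decomp v, map_sum]
  exact Finset.sum_congr rfl fun i _ => by rw [T.map_smul, smul_eq_mul]

end AuxMachinery

open Set Metric

section Had
variable {n : ℕ} (B : EuclideanSpace ℝ (Fin n) → Matrix (Fin n) (Fin n) ℝ)

/-- The ODE field. -/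
def Vf (w : EuclideanSpace ℝ (Fin n)) : EuclideanSpace ℝ (Fin n) → EuclideanSpace ℝ (Fin n) :=
  fun x => toE (fun j => -(∑ i, w i * B x i j))

variable {B}

lemma Vf_smooth (hB : ∀ i j, ContDiff ℝ (⊤:ℕ∞) fun x => B x i j) (w : EuclideanSpace ℝ (Fin n)) :
    ContDiff ℝ (⊤:ℕ∞) (Vf B w) := by
  apply (contDiff_piLp 2).2
  intro j
  exact (ContDiff.sum fun i _ => contDiff_const.mul (hB i j)).neg

lemma Vf_bound {K : ℝ}
    (hBb : ∀ x w : EuclideanSpace ℝ (Fin n),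
      ‖toE (fun j => ∑ i, w i * B x i j)‖ ≤ K * ‖w‖)
    (w x : EuclideanSpace ℝ (Fin n)) : ‖Vf B w x‖ ≤ K * ‖w‖ := by
  have : Vf B w x = -(toE (fun j => ∑ i, w i * B x i j)) := rfl
  rw [this, norm_neg]
  exact hBb x w

lemma Vf_sub (w w' x : EuclideanSpace ℝ (Fin n)) :
    Vf B w x - Vf B w' x = Vf B (w - w') x := by
  ext j
  show -(∑ i, w i * B x i j) - -(∑ i, w' i * B x i j) = -(∑ i, (w - w') i * B x i j)
  have : ∀ i, (w - w') i * B x i j = w i * B x i j - w' i * B x i j := by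
    intro i; show (w i - w' i) * _ = _; ring
  simp only [this, Finset.sum_sub_distrib]
  ring

lemma Vf_lipschitzOn (hB : ∀ i j, ContDiff ℝ (⊤:ℕ∞) fun x => B x i j)
    (w c : EuclideanSpace ℝ (Fin n)) (r : ℝ) :
    ∃ L : NNReal, LipschitzOnWith L (Vf B w) (closedBall c r) := by
  have hV := Vf_smooth hB w
  have hcont : ContinuousOn (fderiv ℝ (Vf B w)) (closedBall c r) :=
    (hV.continuous_fderiv (by simp)).continuousOn
  obtain ⟨C, hC⟩ := (isCompact_closedBall c r).exists_bound_of_continuousOn hcont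
  refine ⟨C.toNNReal, ?_⟩
  refine (convex_closedBall c r).lipschitzOnWith_of_nnnorm_fderiv_le
    (fun x _ => (hV.differentiable (by simp)).differentiableAt) (fun x hx => ?_)
  rw [← NNReal.coe_le_coe, coe_nnnorm, Real.coe_toNNReal']
  exact (hC x hx).trans (le_max_left _ _)

lemma flow_exists (hB : ∀ i j, ContDiff ℝ (⊤:ℕ∞) fun x => B x i j) {K : ℝ} (hK : 1 ≤ K)
    (hBb : ∀ x w : EuclideanSpace ℝ (Fin n),
      ‖toE (fun j => ∑ i, w i * B x i j)‖ ≤ K * ‖w‖)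
    (w y : EuclideanSpace ℝ (Fin n)) :
    ∃ σ : ℝ → EuclideanSpace ℝ (Fin n), σ 0 = y ∧
      ∀ t ∈ Icc (0:ℝ) 1, HasDerivWithinAt σ (Vf B w (σ t)) (Icc (0:ℝ) 1) t := by
  have hKw : (0:ℝ) ≤ K * ‖w‖ := by positivity
  obtain ⟨L, hL⟩ := Vf_lipschitzOn hB w y (K * ‖w‖ + 1)
  have hpl : IsPicardLindelof (fun _ x => Vf B w x) (tmin := 0) (tmax := 1)
      ⟨0, by norm_num⟩ y ⟨K * ‖w‖ + 1, by positivity⟩ 0 ⟨K * ‖w‖, hKw⟩ L :=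
    { lipschitzOnWith := fun t _ => hL
      continuousOn := fun x _ => continuousOn_const
      norm_le := fun t _ x _ => Vf_bound hBb w x
      mul_max_le := by
        show K * ‖w‖ * max (1 - 0 : ℝ) (0 - 0) ≤ (K * ‖w‖ + 1) - ((0 : NNReal) : ℝ)
        simp only [NNReal.coe_zero, sub_zero]
        rw [max_eq_left zero_le_one]
        linarith }
  obtain ⟨σ, hσ0, hσd⟩ := hpl.exists_eq_forall_mem_Icc_hasDerivWithinAt₀
  exact ⟨σ, hσ0, hσd⟩

end Had

section Had2
variable {n : ℕ} {G : EuclideanSpace ℝ (Fin n) → EuclideanSpace ℝ (Fin n)}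
  {A B : EuclideanSpace ℝ (Fin n) → Matrix (Fin n) (Fin n) ℝ}

lemma flow_component
    (hA : ∀ (x : EuclideanSpace ℝ (Fin n)) (j : Fin n),
      HasFDerivAt (fun y => G y j) (innerSL ℝ (toE (fun i => A x i j))) x)
    (hBA : ∀ (x w : EuclideanSpace ℝ (Fin n)) (j : Fin n),
      ∑ i, (∑ k, w k * B x k i) * A x i j = w j)
    {w : EuclideanSpace ℝ (Fin n)} {σ : ℝ → EuclideanSpace ℝ (Fin n)}
    (hσd : ∀ t ∈ Icc (0:ℝ) 1, HasDerivWithinAt σ (Vf B w (σ t)) (Icc (0:ℝ) 1) t)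
    (j : Fin n) {t : ℝ} (ht : t ∈ Icc (0:ℝ) 1) :
    HasDerivWithinAt (fun s => G (σ s) j + s * w j) 0 (Icc (0:ℝ) 1) t := by
  have h1 := (hA (σ t) j).comp_hasDerivWithinAt t (hσd t ht)
  have h2 := h1.add ((hasDerivAt_mul_const (w j)).hasDerivWithinAt)
  refine h2.congr_deriv ?_
  have hval : (innerSL ℝ (toE (fun i => A (σ t) i j))) (Vf B w (σ t)) = -(w j) := by
    have : (innerSL ℝ (toE (fun i => A (σ t) i j))) (Vf B w (σ t))
        = ∑ i, A (σ t) i j * (-(∑ k, w k * B (σ t) k i)) := by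
      simp [PiLp.inner_apply, RCLike.inner_apply, Vf]
      exact Finset.sum_congr rfl fun _ _ => mul_comm _ _
    rw [this, ← hBA (σ t) w j, ← Finset.sum_neg_distrib]
    congr 1; funext i; ring
  rw [hval]; ring

lemma flow_endpoint_zero
    (hA : ∀ (x : EuclideanSpace ℝ (Fin n)) (j : Fin n),
      HasFDerivAt (fun y => G y j) (innerSL ℝ (toE (fun i => A x i j))) x)
    (hBA : ∀ (x w : EuclideanSpace ℝ (Fin n)) (j : Fin n),
      ∑ i, (∑ k, w k * B x k i) * A x i j = w j)
    {y : EuclideanSpace ℝ (Fin n)} {σ : ℝ → EuclideanSpace ℝ (Fin n)}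
    (hσ0 : σ 0 = y)
    (hσd : ∀ t ∈ Icc (0:ℝ) 1, HasDerivWithinAt σ (Vf B (G y) (σ t)) (Icc (0:ℝ) 1) t) :
    G (σ 1) = 0 := by
  have key : ∀ j, G (σ 1) j + 1 * G y j = G (σ 0) j + 0 * G y j := by
    intro j
    have hconst := constant_of_has_deriv_right_zero
      (f := fun s => G (σ s) j + s * G y j) (a := 0) (b := 1)
      (fun t ht => ((flow_component hA hBA hσd j ht)).continuousWithinAt)
      (fun t ht => hasDerivWithinAt_Ici_of_Icc ht
        (flow_component hA hBA hσd j (Ico_subset_Icc_self ht)))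
    exact hconst 1 (by constructor <;> norm_num)
  ext j
  have := key j
  rw [hσ0] at this
  show G (σ 1) j = (0:ℝ)
  linarith [this]

lemma flow_dist {K : ℝ} (hK : 1 ≤ K)
    (hBb : ∀ x w : EuclideanSpace ℝ (Fin n),
      ‖toE (fun j => ∑ i, w i * B x i j)‖ ≤ K * ‖w‖)
    {w y : EuclideanSpace ℝ (Fin n)} {σ : ℝ → EuclideanSpace ℝ (Fin n)}
    (hσ0 : σ 0 = y)
    (hσd : ∀ t ∈ Icc (0:ℝ) 1, HasDerivWithinAt σ (Vf B w (σ t)) (Icc (0:ℝ) 1) t)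
    {t : ℝ} (ht : t ∈ Icc (0:ℝ) 1) : ‖σ t - y‖ ≤ K * ‖w‖ := by
  have := norm_image_sub_le_of_norm_deriv_le_segment' hσd
    (fun s _ => Vf_bound hBb w (σ s)) t ht
  rw [hσ0] at this
  have hKw : (0:ℝ) ≤ K * ‖w‖ := by positivity
  nlinarith [ht.1, ht.2, this]

end Had2

section Had3
variable {n : ℕ} {G : EuclideanSpace ℝ (Fin n) → EuclideanSpace ℝ (Fin n)}
  {A B : EuclideanSpace ℝ (Fin n) → Matrix (Fin n) (Fin n) ℝ}

lemma zero_isolated {K : ℝ} (hK : 1 ≤ K)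
    (hA : ∀ (x : EuclideanSpace ℝ (Fin n)) (j : Fin n),
      HasFDerivAt (fun y => G y j) (innerSL ℝ (toE (fun i => A x i j))) x)
    (hBb : ∀ x w : EuclideanSpace ℝ (Fin n),
      ‖toE (fun j => ∑ i, w i * B x i j)‖ ≤ K * ‖w‖)
    (hAB : ∀ (x w : EuclideanSpace ℝ (Fin n)) (j : Fin n),
      ∑ i, (∑ k, w k * A x k i) * B x i j = w j)
    {z₀ : EuclideanSpace ℝ (Fin n)} (hz₀ : G z₀ = 0) :
    ∃ ε > 0, ∀ x ∈ Metric.ball z₀ ε, G x = 0 → x = z₀ := by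
  have hK0 : (0:ℝ) < K := lt_of_lt_of_le one_pos hK
  -- the full derivative of G at z₀
  set Tfun : EuclideanSpace ℝ (Fin n) →L[ℝ] (Fin n → ℝ) :=
    ContinuousLinearMap.pi (fun j => innerSL ℝ (toE (fun i => A z₀ i j))) with hTfun
  have hGfun : HasFDerivAt (fun x => (fun j => G x j : Fin n → ℝ)) Tfun z₀ := by
    apply hasFDerivAt_pi''
    intro j
    rw [hTfun, ContinuousLinearMap.proj_pi]
    exact hA z₀ j
  set L2 := (PiLp.continuousLinearEquiv 2 ℝ (fun _ : Fin n => ℝ)) with hL2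
  set T : EuclideanSpace ℝ (Fin n) →L[ℝ] EuclideanSpace ℝ (Fin n) :=
    (L2.symm : (Fin n → ℝ) →L[ℝ] EuclideanSpace ℝ (Fin n)).comp Tfun with hT
  have hGT : HasFDerivAt G T z₀ :=
    ((L2.symm : (Fin n → ℝ) →L[ℝ] EuclideanSpace ℝ (Fin n)).hasFDerivAt).comp z₀ hGfun
  -- coordinates of T v
  have hTv : ∀ (v : EuclideanSpace ℝ (Fin n)) (j : Fin n),
      (T v) j = ∑ k, v k * A z₀ k j := by
    intro v j
    show (innerSL ℝ (toE (fun i => A z₀ i j))) v = _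
    simp only [innerSL_apply_apply, PiLp.inner_apply, RCLike.inner_apply, starRingEnd_apply,
      star_trivial, toE_apply]
  -- lower bound for T
  have hTlow : ∀ v : EuclideanSpace ℝ (Fin n), ‖v‖ ≤ K * ‖T v‖ := by
    intro v
    have hrecover : v = toE (fun j => ∑ i, (T v) i * B z₀ i j) := by
      ext j
      rw [toE_apply, ← hAB z₀ v j]
      congr 1
    calc ‖v‖ = ‖toE (fun j => ∑ i, (T v) i * B z₀ i j)‖ := by rw [← hrecover]
      _ ≤ K * ‖T v‖ := hBb z₀ (T v)
  -- little-o estimate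
  have hlo := hGT.isLittleO.bound (c := (2*K)⁻¹) (by positivity)
  rw [Metric.eventually_nhds_iff] at hlo
  obtain ⟨ε, hε, hball⟩ := hlo
  refine ⟨ε, hε, fun x hx hGx => ?_⟩
  have h1 := hball (show dist x z₀ < ε from hx)
  rw [hGx, hz₀] at h1
  simp only [zero_sub, norm_neg] at h1
  have h2 : ‖x - z₀‖ ≤ K * ‖T (x - z₀)‖ := hTlow _
  have h3 : ‖x - z₀‖ ≤ K * ((2*K)⁻¹ * ‖x - z₀‖) := by
    refine h2.trans (mul_le_mul_of_nonneg_left ?_ hK0.le)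
    have h1' : ‖T (x - z₀)‖ ≤ (2*K)⁻¹ * ‖x - z₀‖ := by
      have : ‖-(0:EuclideanSpace ℝ (Fin n)) - T (x - z₀)‖ = ‖T (x - z₀)‖ := by
        rw [neg_zero, zero_sub, norm_neg]
      rwa [this] at h1
    exact h1'
  have h4 : K * ((2*K)⁻¹ * ‖x - z₀‖) = ‖x - z₀‖ / 2 := by
    field_simp
  rw [h4] at h3
  have : ‖x - z₀‖ = 0 := by linarith [norm_nonneg (x - z₀)]
  have := norm_eq_zero.mp this
  exact sub_eq_zero.mp this
end Had3

lemma gronwallBound_le_one (δ L ε : ℝ) (hδ : 0 ≤ δ) (hε : 0 ≤ ε) (hL : 0 ≤ L) :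
    gronwallBound δ L ε 1 ≤ (δ + ε) * Real.exp L := by
  rcases eq_or_ne L 0 with h0 | h0
  · rw [h0, gronwallBound_K0]
    have := Real.exp_pos (0:ℝ)
    simp only [Real.exp_zero]
    nlinarith [Real.exp_zero]
  · rw [gronwallBound_of_K_ne_0 h0]
    have hLpos : 0 < L := lt_of_le_of_ne hL (Ne.symm h0)
    have hexp : Real.exp L - 1 ≤ L * Real.exp L := by
      have h1 := Real.add_one_le_exp (-L)
      have h2 : Real.exp (-L) * Real.exp L = 1 := by
        rw [← Real.exp_add]; simp
      nlinarith [Real.exp_pos L]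
    have hdiv : ε / L * (Real.exp L - 1) ≤ ε * Real.exp L := by
      rw [div_mul_eq_mul_div, div_le_iff₀ hLpos]
      have : 0 ≤ ε * (L * Real.exp L - (Real.exp L - 1)) := by
        apply mul_nonneg hε; linarith
      nlinarith
    show δ * Real.exp (L * 1) + ε / L * (Real.exp (L * 1) - 1) ≤ (δ + ε) * Real.exp L
    rw [mul_one]
    nlinarith [Real.exp_pos L]

section Had4
variable {n : ℕ} {G : EuclideanSpace ℝ (Fin n) → EuclideanSpace ℝ (Fin n)}
  {A B : EuclideanSpace ℝ (Fin n) → Matrix (Fin n) (Fin n) ℝ}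

theorem hadamard_zero {K : ℝ} (hK : 1 ≤ K)
    (hGsmooth : ∀ j, ContDiff ℝ (⊤:ℕ∞) fun x => G x j)
    (hB : ∀ i j, ContDiff ℝ (⊤:ℕ∞) fun x => B x i j)
    (hA : ∀ (x : EuclideanSpace ℝ (Fin n)) (j : Fin n),
      HasFDerivAt (fun y => G y j) (innerSL ℝ (toE (fun i => A x i j))) x)
    (hBb : ∀ x w : EuclideanSpace ℝ (Fin n),
      ‖toE (fun j => ∑ i, w i * B x i j)‖ ≤ K * ‖w‖)
    (hBA : ∀ (x w : EuclideanSpace ℝ (Fin n)) (j : Fin n),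
      ∑ i, (∑ k, w k * B x k i) * A x i j = w j)
    (hAB : ∀ (x w : EuclideanSpace ℝ (Fin n)) (j : Fin n),
      ∑ i, (∑ k, w k * A x k i) * B x i j = w j) :
    ∃ z : EuclideanSpace ℝ (Fin n), ∀ y, ‖y - z‖ ≤ K * ‖G y‖ := by
  have hK0 : (0:ℝ) < K := lt_of_lt_of_le one_pos hK
  have hGC : Continuous G := ((contDiff_piLp 2).2 hGsmooth).continuous
  -- existence of endpoints
  have hex : ∀ y : EuclideanSpace ℝ (Fin n), ∃ σ : ℝ → EuclideanSpace ℝ (Fin n),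
      σ 0 = y ∧ ∀ t ∈ Icc (0:ℝ) 1, HasDerivWithinAt σ (Vf B (G y) (σ t)) (Icc (0:ℝ) 1) t :=
    fun y => flow_exists hB hK hBb (G y) y
  choose σv hσ0 hσd using hex
  set Emap : EuclideanSpace ℝ (Fin n) → EuclideanSpace ℝ (Fin n) := fun y => σv y 1 with hEmap
  have hzero : ∀ y, G (Emap y) = 0 := fun y => flow_endpoint_zero hA hBA (hσ0 y) (hσd y)
  have hdist : ∀ y, ‖Emap y - y‖ ≤ K * ‖G y‖ := fun y =>
    flow_dist hK hBb (hσ0 y) (hσd y) (right_mem_Icc.2 zero_le_one)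
  -- local constancy of Emap
  have hloc : ∀ y₀, ∀ᶠ y in nhds y₀, Emap y = Emap y₀ := by
    intro y₀
    obtain ⟨ε₀, hε₀, huniq⟩ := zero_isolated hK hA hBb hAB (hzero y₀)
    set ρ : ℝ := K * (‖G y₀‖ + 1) + 1 with hρ
    obtain ⟨L, hL⟩ := Vf_lipschitzOn hB (G y₀) y₀ ρ
    -- eventually conditions
    have hcont1 : ContinuousAt (fun y => ‖y - y₀‖) y₀ :=
      (continuous_norm.comp (continuous_id.sub continuous_const)).continuousAt
    have hcont2 : ContinuousAt (fun y => ‖G y - G y₀‖) y₀ :=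
      (continuous_norm.comp ((hGC.sub continuous_const))).continuousAt
    have hev1 : ∀ᶠ y in nhds y₀, ‖y - y₀‖ < 1 := by
      have h := hcont1.tendsto
      rw [show ‖y₀ - y₀‖ = 0 by simp] at h
      exact h.eventually_lt_const one_pos
    have hev2 : ∀ᶠ y in nhds y₀, ‖G y - G y₀‖ < 1 := by
      have h := hcont2.tendsto
      rw [show ‖G y₀ - G y₀‖ = 0 by simp] at h
      exact h.eventually_lt_const one_pos
    have hev3 : ∀ᶠ y in nhds y₀,
        (‖y - y₀‖ + K * ‖G y - G y₀‖) * Real.exp L < ε₀ := by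
      have hc : ContinuousAt (fun y => (‖y - y₀‖ + K * ‖G y - G y₀‖) * Real.exp L) y₀ :=
        ((hcont1.add (continuousAt_const.mul hcont2)).mul continuousAt_const)
      have h := hc.tendsto
      rw [show (‖y₀ - y₀‖ + K * ‖G y₀ - G y₀‖) * Real.exp L = 0 by simp] at h
      exact h.eventually_lt_const hε₀
    filter_upwards [hev1, hev2, hev3] with y h1 h2 h3
    -- both trajectories stay in the ball of radius ρ around y₀
    have htrajf : ∀ t ∈ Ico (0:ℝ) 1, σv y₀ t ∈ Metric.closedBall y₀ ρ := by
      intro t ht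
      rw [Metric.mem_closedBall, dist_eq_norm]
      have := flow_dist hK hBb (hσ0 y₀) (hσd y₀) (Ico_subset_Icc_self ht)
      have hGnn : (0:ℝ) ≤ ‖G y₀‖ := norm_nonneg _
      nlinarith
    have htrajg : ∀ t ∈ Ico (0:ℝ) 1, σv y t ∈ Metric.closedBall y₀ ρ := by
      intro t ht
      rw [Metric.mem_closedBall, dist_eq_norm]
      have hd := flow_dist hK hBb (hσ0 y) (hσd y) (Ico_subset_Icc_self ht)
      have : ‖G y‖ ≤ ‖G y₀‖ + 1 := by
        calc ‖G y‖ = ‖G y₀ + (G y - G y₀)‖ := by rw [add_sub_cancel]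
          _ ≤ ‖G y₀‖ + ‖G y - G y₀‖ := norm_add_le _ _
          _ ≤ ‖G y₀‖ + 1 := by linarith
      calc ‖σv y t - y₀‖ ≤ ‖σv y t - y‖ + ‖y - y₀‖ := norm_sub_le_norm_sub_add_norm_sub _ _ _
        _ ≤ K * ‖G y‖ + 1 := by linarith
        _ ≤ ρ := by rw [hρ]; nlinarith
    -- Grönwall comparison
    have hgron := dist_le_of_approx_trajectories_ODE_of_mem
      (v := fun _ x => Vf B (G y₀) x) (s := fun _ => Metric.closedBall y₀ ρ) (K := L)
      (fun _ _ => hL)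
      (fun t ht => ((hσd y₀ t ht)).continuousWithinAt)
      (fun t ht => hasDerivWithinAt_Ici_of_Icc ht (hσd y₀ t (Ico_subset_Icc_self ht)))
      (fun t ht => by rw [dist_self])
      htrajf
      (fun t ht => ((hσd y t ht)).continuousWithinAt)
      (fun t ht => hasDerivWithinAt_Ici_of_Icc ht (hσd y t (Ico_subset_Icc_self ht)))
      (fun t ht => by
        rw [dist_eq_norm, Vf_sub]
        exact Vf_bound hBb _ _)
      htrajg
      (by rw [hσ0 y₀, hσ0 y, dist_eq_norm, norm_sub_rev])
      1 (right_mem_Icc.2 zero_le_one)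
    -- conclude
    have hgb : gronwallBound ‖y - y₀‖ L (0 + K * ‖G y - G y₀‖) (1 - 0) < ε₀ := by
      rw [zero_add, sub_zero]
      refine lt_of_le_of_lt (gronwallBound_le_one _ _ _ (norm_nonneg _)
        (by positivity) L.2) ?_
      exact h3
    have hdistE : dist (Emap y) (Emap y₀) < ε₀ := by
      rw [hEmap, dist_comm]
      exact lt_of_le_of_lt hgron hgb
    exact huniq (Emap y) (Metric.mem_ball.2 hdistE) (hzero y)
  -- Emap is constant by connectedness
  haveI : PreconnectedSpace (EuclideanSpace ℝ (Fin n)) :=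
    ⟨(convex_univ : Convex ℝ (univ : Set (EuclideanSpace ℝ (Fin n)))).isPreconnected⟩
  set S : Set (EuclideanSpace ℝ (Fin n)) := {y | Emap y = Emap 0} with hS
  have hSopen : IsOpen S := by
    rw [isOpen_iff_mem_nhds]
    intro y₀ hy₀
    have hy₀' : Emap y₀ = Emap 0 := hy₀
    exact (hloc y₀).mono fun y hy => show Emap y = Emap 0 from hy.trans hy₀'
  have hScopen : IsOpen Sᶜ := by
    rw [isOpen_iff_mem_nhds]
    intro y₀ hy₀
    exact (hloc y₀).mono fun y hy => fun hyS =>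
      hy₀ (show Emap y₀ = Emap 0 from hy.symm.trans hyS)
  have hSuniv : S = univ :=
    IsClopen.eq_univ ⟨isOpen_compl_iff.mp hScopen, hSopen⟩ ⟨0, rfl⟩
  refine ⟨Emap 0, fun y => ?_⟩
  have hyS : Emap y = Emap 0 := by
    have : y ∈ S := hSuniv ▸ mem_univ y
    exact this
  rw [← hyS, norm_sub_rev]
  exact hdist y

end Had4


/-- (Remark after Theorem 3.1.) Under the phase assumptions of the
main theorem, `⟨∂_ξ φ(y,ξ)⟩` is comparable to `⟨y⟩` uniformly in `(y,ξ)`. -/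
theorem statement14 (n : ℕ)
    (φ : EuclideanSpace ℝ (Fin n) × EuclideanSpace ℝ (Fin n) → ℝ)
    (hφ : ContDiff ℝ (⊤ : ℕ∞) φ)
    (C₀ : ℝ) (hC₀ : 0 < C₀)
    -- nondegeneracy of the mixed Hessian `∂_y∂_ξ φ`:
    (hdet : ∀ z, C₀ ≤ |Matrix.det (Matrix.of fun i j => mixedHessXY φ i j z)|)
    -- `|∂_y^α∂_ξ^β φ| ≤ C_{αβ}` for all `|α| ≥ 1`, `|β| ≥ 1`:
    (Cab : (Fin n → ℕ) → (Fin n → ℕ) → ℝ)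
    (hmix : ∀ α β : Fin n → ℕ, 1 ≤ mdeg α → 1 ≤ mdeg β →
      ∀ z, |mderiv dX α (mderiv dY β φ) z| ≤ Cab α β)
    -- `|∂_ξ^β φ(y,ξ)| ≤ C_β ⟨y⟩` for all `|β| ≥ 1`:
    (Cb : (Fin n → ℕ) → ℝ)
    (hxi : ∀ β : Fin n → ℕ, 1 ≤ mdeg β →
      ∀ z : EuclideanSpace ℝ (Fin n) × EuclideanSpace ℝ (Fin n),
        |mderiv dY β φ z| ≤ Cb β * jap z.1) :
    ∃ C₁ C₂ : ℝ, 0 < C₁ ∧ 0 < C₂ ∧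
      ∀ z : EuclideanSpace ℝ (Fin n) × EuclideanSpace ℝ (Fin n),
        C₁ * jap z.1 ≤ Real.sqrt (1 + ∑ j, (dLine (dY j) φ z) ^ 2) ∧
        Real.sqrt (1 + ∑ j, (dLine (dY j) φ z) ^ 2) ≤ C₂ * jap z.1 := by
  classical
  have hφ' : ContDiff ℝ ((⊤:ℕ∞)) φ := hφ.of_le (by simp)
  have hgj : ∀ j : Fin n, ContDiff ℝ (⊤:ℕ∞) (dLine (dY (n:=n) j) φ) :=
    fun j => contDiff_dLine hφ' _
  have hAij : ∀ i j : Fin n, ContDiff ℝ (⊤:ℕ∞) (mixedHessXY φ i j) :=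
    fun i j => contDiff_dLine (hgj j) _
  set Mb : ℝ := (∑ i : Fin n, ∑ j : Fin n, |Cab (Pi.single i 1) (Pi.single j 1)|) + 1 with hMbdef
  have hMb1 : 1 ≤ Mb := by
    have : (0:ℝ) ≤ ∑ i : Fin n, ∑ j : Fin n, |Cab (Pi.single i 1) (Pi.single j 1)| :=
      Finset.sum_nonneg fun _ _ => Finset.sum_nonneg fun _ _ => abs_nonneg _
    rw [hMbdef]; linarith
  set Minv : ℝ := C₀⁻¹ * (Nat.factorial n * Mb ^ n) with hMinvdef
  have hMinv0 : 0 ≤ Minv := by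
    rw [hMinvdef]
    have h0 : (0:ℝ) ≤ Mb ^ n := by positivity
    have h1 : (0:ℝ) ≤ C₀⁻¹ := inv_nonneg.2 hC₀.le
    positivity
  set K : ℝ := (n*n : ℝ) * Minv + 1 with hKdef
  have hK1 : 1 ≤ K := by
    have : (0:ℝ) ≤ (n*n : ℝ) * Minv := mul_nonneg (by positivity) hMinv0
    rw [hKdef]; linarith
  have hK0 : (0:ℝ) ≤ K := by linarith
  have hAbd : ∀ (z : EuclideanSpace ℝ (Fin n) × EuclideanSpace ℝ (Fin n)) (i j : Fin n),
      |mixedHessXY φ i j z| ≤ Mb := by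
    intro z i j
    have h1 := hmix (Pi.single i 1) (Pi.single j 1) (by rw [mdeg_single]) (by rw [mdeg_single]) z
    rw [mderiv_single, mderiv_single] at h1
    have h2 : Cab (Pi.single i 1) (Pi.single j 1) ≤ Mb := by
      calc Cab (Pi.single i 1) (Pi.single j 1) ≤ |Cab (Pi.single i 1) (Pi.single j 1)| :=
            le_abs_self _
        _ ≤ ∑ j' : Fin n, |Cab (Pi.single i 1) (Pi.single j' 1)| :=
            Finset.single_le_sum (f := fun j' => |Cab (Pi.single i 1) (Pi.single j' 1)|)
              (fun _ _ => abs_nonneg _) (Finset.mem_univ j)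
        _ ≤ ∑ i' : Fin n, ∑ j' : Fin n, |Cab (Pi.single i' 1) (Pi.single j' 1)| :=
            Finset.single_le_sum
              (f := fun i' => ∑ j' : Fin n, |Cab (Pi.single i' 1) (Pi.single j' 1)|)
              (fun _ _ => Finset.sum_nonneg fun _ _ => abs_nonneg _) (Finset.mem_univ i)
        _ ≤ Mb := by rw [hMbdef]; linarith
    exact le_trans h1 h2
  have hdetne : ∀ z : EuclideanSpace ℝ (Fin n) × EuclideanSpace ℝ (Fin n),
      (Matrix.of fun i j => mixedHessXY φ i j z).det ≠ 0 := by
    intro z h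
    have h1 := lt_of_lt_of_le hC₀ (hdet z)
    rw [h] at h1
    simp at h1
  have hBentry : ∀ (z : EuclideanSpace ℝ (Fin n) × EuclideanSpace ℝ (Fin n)) (i j : Fin n),
      |(Matrix.of fun i' j' => mixedHessXY φ i' j' z)⁻¹ i j| ≤ Minv := by
    intro z i j
    rw [hMinvdef]
    exact inv_entry_abs_le_aux _ hMb1 hC₀ (hdet z) (fun i' j' => hAbd z i' j') i j
  -- the per-ξ global inverse bound
  have main : ∀ ξ : EuclideanSpace ℝ (Fin n), ∃ zst : EuclideanSpace ℝ (Fin n),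
      ∀ y : EuclideanSpace ℝ (Fin n),
        ‖y - zst‖ ≤ K * ‖toE (fun j => dLine (dY j) φ (y, ξ))‖ := by
    intro ξ
    refine hadamard_zero (G := fun y => toE (fun j => dLine (dY j) φ (y, ξ)))
      (A := fun x => Matrix.of fun i j => mixedHessXY φ i j (x, ξ))
      (B := fun x => (Matrix.of fun i j => mixedHessXY φ i j (x, ξ))⁻¹)
      hK1 ?_ ?_ ?_ ?_ ?_ ?_
    · intro j
      exact (hgj j).comp (contDiff_id.prodMk contDiff_const)
    · intro i j
      exact contDiff_inv_entry_aux
        (M := fun x => Matrix.of fun i' j' => mixedHessXY φ i' j' (x, ξ))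
        (fun i' j' => (hAij i' j').comp (contDiff_id.prodMk contDiff_const))
        (fun x => hdetne (x, ξ)) i j
    · intro x j
      have h1 : HasFDerivAt (dLine (dY j) φ) (fderiv ℝ (dLine (dY j) φ) (x, ξ)) (x, ξ) :=
        (((hgj j).differentiable (by simp)) (x, ξ)).hasFDerivAt
      have h2 : HasFDerivAt (fun y : EuclideanSpace ℝ (Fin n) => (y, ξ))
          ((ContinuousLinearMap.id ℝ (EuclideanSpace ℝ (Fin n))).prod 0) x :=
        (hasFDerivAt_id x).prodMk (hasFDerivAt_const ξ x)
      have h3 := h1.comp x h2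
      have heq : (fderiv ℝ (dLine (dY j) φ) (x, ξ)).comp
          ((ContinuousLinearMap.id ℝ (EuclideanSpace ℝ (Fin n))).prod 0)
          = innerSL ℝ (toE (fun i =>
              (Matrix.of fun i' j' => mixedHessXY φ i' j' (x, ξ)) i j)) := by
        apply ContinuousLinearMap.ext
        intro v
        rw [ContinuousLinearMap.comp_apply]
        have hv : ((ContinuousLinearMap.id ℝ (EuclideanSpace ℝ (Fin n))).prod 0) v
            = (v, (0 : EuclideanSpace ℝ (Fin n))) := rfl
        rw [hv, clm_prod_eval, innerSL_apply_apply]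
        simp only [PiLp.inner_apply, RCLike.inner_apply, starRingEnd_apply, star_trivial,
          toE_apply, Matrix.of_apply]
        refine Finset.sum_congr rfl fun i _ => ?_
        rw [mul_comm]
        exact mul_comm _ _
      rw [← heq]
      exact h3
    · intro x w
      have hcomp : ∀ j : Fin n,
          |∑ i, w i * (Matrix.of fun i' j' => mixedHessXY φ i' j' (x, ξ))⁻¹ i j|
            ≤ (n : ℝ) * (Minv * ‖w‖) := by
        intro j
        calc |∑ i, w i * (Matrix.of fun i' j' => mixedHessXY φ i' j' (x, ξ))⁻¹ i j|
            ≤ ∑ i, |w i * (Matrix.of fun i' j' => mixedHessXY φ i' j' (x, ξ))⁻¹ i j| :=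
              Finset.abs_sum_le_sum_abs _ _
          _ ≤ ∑ _i : Fin n, Minv * ‖w‖ := by
              refine Finset.sum_le_sum fun i _ => ?_
              rw [abs_mul]
              calc |w i| * |(Matrix.of fun i' j' => mixedHessXY φ i' j' (x, ξ))⁻¹ i j|
                  ≤ ‖w‖ * Minv := mul_le_mul (euclid_abs_coord_le w i)
                    (hBentry (x, ξ) i j) (abs_nonneg _) (norm_nonneg _)
                _ = Minv * ‖w‖ := mul_comm _ _
          _ = (n : ℝ) * (Minv * ‖w‖) := by
              rw [Finset.sum_const, Finset.card_univ, Fintype.card_fin, nsmul_eq_mul]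
      have h4 := euclid_norm_le_of_coord_le
        (toE (fun j => ∑ i, w i * (Matrix.of fun i' j' => mixedHessXY φ i' j' (x, ξ))⁻¹ i j))
        (mul_nonneg (Nat.cast_nonneg n) (mul_nonneg hMinv0 (norm_nonneg w)))
        (fun j => by rw [toE_apply]; exact hcomp j)
      refine h4.trans ?_
      rw [hKdef]
      nlinarith [norm_nonneg w, hMinv0, Nat.cast_nonneg (α := ℝ) n]
    · intro x w j
      exact vecMul_inv_vecMul_aux _ (isUnit_iff_ne_zero.mpr (hdetne (x, ξ))) w j
    · intro x w j
      exact vecMul_vecMul_inv_aux _ (isUnit_iff_ne_zero.mpr (hdetne (x, ξ))) w j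
  -- constants for the final estimate
  set CbM : ℝ := (∑ j : Fin n, |Cb (Pi.single j 1)|) + 1 with hCbMdef
  have hCbM1 : 1 ≤ CbM := by
    have : (0:ℝ) ≤ ∑ j : Fin n, |Cb (Pi.single j 1)| :=
      Finset.sum_nonneg fun _ _ => abs_nonneg _
    rw [hCbMdef]; linarith
  have hjap1 : ∀ x : EuclideanSpace ℝ (Fin n), 1 ≤ jap x := by
    intro x
    rw [jap]
    calc (1:ℝ) = Real.sqrt 1 := (Real.sqrt_one).symm
      _ ≤ Real.sqrt (1 + ‖x‖^2) := Real.sqrt_le_sqrt (by nlinarith [sq_nonneg ‖x‖])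
  have hjap_nonneg : ∀ x : EuclideanSpace ℝ (Fin n), 0 ≤ jap x :=
    fun x => Real.sqrt_nonneg _
  have hjap0 : jap (0 : EuclideanSpace ℝ (Fin n)) = 1 := by
    rw [jap, norm_zero]
    norm_num
  have hjap_le : ∀ x : EuclideanSpace ℝ (Fin n), jap x ≤ 1 + ‖x‖ := by
    intro x
    rw [jap]
    calc Real.sqrt (1 + ‖x‖^2) ≤ Real.sqrt ((1 + ‖x‖)^2) :=
          Real.sqrt_le_sqrt (by nlinarith [norm_nonneg x])
      _ = |1 + ‖x‖| := Real.sqrt_sq_eq_abs _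
      _ = 1 + ‖x‖ := abs_of_nonneg (by nlinarith [norm_nonneg x])
  have hG0 : ∀ ξ : EuclideanSpace ℝ (Fin n),
      ‖toE (fun j => dLine (dY j) φ ((0 : EuclideanSpace ℝ (Fin n)), ξ))‖ ≤ n * CbM := by
    intro ξ
    refine euclid_norm_le_of_coord_le _ (by linarith) (fun j => ?_)
    rw [toE_apply]
    have h1 := hxi (Pi.single j 1) (by rw [mdeg_single]) ((0 : EuclideanSpace ℝ (Fin n)), ξ)
    rw [mderiv_single] at h1
    have h2 : jap ((0 : EuclideanSpace ℝ (Fin n)), ξ).1 = 1 := hjap0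
    rw [h2, mul_one] at h1
    calc |dLine (dY j) φ ((0 : EuclideanSpace ℝ (Fin n)), ξ)| ≤ Cb (Pi.single j 1) := h1
      _ ≤ |Cb (Pi.single j 1)| := le_abs_self _
      _ ≤ ∑ j' : Fin n, |Cb (Pi.single j' 1)| :=
          Finset.single_le_sum (f := fun j' => |Cb (Pi.single j' 1)|)
            (fun _ _ => abs_nonneg _) (Finset.mem_univ j)
      _ ≤ CbM := by rw [hCbMdef]; linarith
  set D : ℝ := 1 + K * ((n : ℝ) * CbM) with hDdef
  have hD1 : 1 ≤ D := by
    have h1 : (0:ℝ) ≤ K * ((n : ℝ) * CbM) :=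
      mul_nonneg hK0 (mul_nonneg (Nat.cast_nonneg n) (by linarith))
    rw [hDdef]; linarith
  have hDK0 : (0:ℝ) < D + K := by linarith
  refine ⟨(D + K)⁻¹, Real.sqrt (1 + ∑ j : Fin n, (Cb (Pi.single j 1))^2),
    inv_pos.2 hDK0, Real.sqrt_pos.2 (by positivity), fun z => ?_⟩
  obtain ⟨zst, hzst⟩ := main z.2
  set gv : EuclideanSpace ℝ (Fin n) := toE (fun j => dLine (dY j) φ z) with hgvdef
  have hz12 : ((z.1, z.2) : EuclideanSpace ℝ (Fin n) × EuclideanSpace ℝ (Fin n)) = z := rfl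
  have hz1 : ‖z.1 - zst‖ ≤ K * ‖gv‖ := by
    have := hzst z.1
    rw [hz12] at this
    exact this
  have hz0 : ‖zst‖ ≤ K * ((n : ℝ) * CbM) := by
    have h1 := hzst 0
    have h2 : ‖(0 : EuclideanSpace ℝ (Fin n)) - zst‖ = ‖zst‖ := by
      rw [zero_sub, norm_neg]
    rw [h2] at h1
    refine h1.trans ?_
    exact mul_le_mul_of_nonneg_left (hG0 z.2) hK0
  have key1 : ‖z.1‖ ≤ K * ‖gv‖ + K * ((n : ℝ) * CbM) := by
    calc ‖z.1‖ = ‖(z.1 - zst) + zst‖ := by rw [sub_add_cancel]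
      _ ≤ ‖z.1 - zst‖ + ‖zst‖ := norm_add_le _ _
      _ ≤ K * ‖gv‖ + K * ((n : ℝ) * CbM) := add_le_add hz1 hz0
  have hjapz : jap z.1 ≤ D + K * ‖gv‖ := by
    have := hjap_le z.1
    rw [hDdef]
    linarith
  -- the sum of squares equals ‖gv‖²
  have hSq : ‖gv‖^2 = ∑ j : Fin n, (dLine (dY j) φ z)^2 := by
    rw [EuclideanSpace.norm_eq, Real.sq_sqrt (Finset.sum_nonneg fun j _ => by positivity)]
    refine Finset.sum_congr rfl fun j _ => ?_
    rw [hgvdef, toE_apply, Real.norm_eq_abs, _root_.sq_abs]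
  set S : ℝ := Real.sqrt (1 + ∑ j : Fin n, (dLine (dY j) φ z)^2) with hSdef
  have hsum_nonneg : (0:ℝ) ≤ ∑ j : Fin n, (dLine (dY j) φ z)^2 :=
    Finset.sum_nonneg fun j _ => by positivity
  have hS1 : 1 ≤ S := by
    rw [hSdef]
    calc (1:ℝ) = Real.sqrt 1 := (Real.sqrt_one).symm
      _ ≤ Real.sqrt (1 + ∑ j : Fin n, (dLine (dY j) φ z)^2) :=
          Real.sqrt_le_sqrt (by linarith)
  have hSg : ‖gv‖ ≤ S := by
    rw [hSdef]
    calc ‖gv‖ = Real.sqrt (‖gv‖^2) := (Real.sqrt_sq (norm_nonneg _)).symm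
      _ = Real.sqrt (∑ j : Fin n, (dLine (dY j) φ z)^2) := by rw [hSq]
      _ ≤ Real.sqrt (1 + ∑ j : Fin n, (dLine (dY j) φ z)^2) :=
          Real.sqrt_le_sqrt (by linarith)
  constructor
  · -- lower bound
    rw [inv_mul_le_iff₀ hDK0]
    calc jap z.1 ≤ D + K * ‖gv‖ := hjapz
      _ ≤ (D + K) * S := by nlinarith [norm_nonneg gv]
  · -- upper bound
    have hterm : ∀ j : Fin n,
        (dLine (dY j) φ z)^2 ≤ (Cb (Pi.single j 1))^2 * (jap z.1)^2 := by
      intro j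
      have h1 := hxi (Pi.single j 1) (by rw [mdeg_single]) z
      rw [mderiv_single] at h1
      calc (dLine (dY j) φ z)^2 = |dLine (dY j) φ z|^2 := (_root_.sq_abs _).symm
        _ ≤ (Cb (Pi.single j 1) * jap z.1)^2 := pow_le_pow_left₀ (abs_nonneg _) h1 2
        _ = (Cb (Pi.single j 1))^2 * (jap z.1)^2 := mul_pow _ _ 2
    have hj1 := hjap1 z.1
    have hj2 : 1 ≤ (jap z.1)^2 := by
      calc (1:ℝ) = 1^2 := (one_pow 2).symm
        _ ≤ (jap z.1)^2 := pow_le_pow_left₀ zero_le_one hj1 2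
    have hsum2 : ∑ j : Fin n, (dLine (dY j) φ z)^2
        ≤ (∑ j : Fin n, (Cb (Pi.single j 1))^2) * (jap z.1)^2 := by
      rw [Finset.sum_mul]
      exact Finset.sum_le_sum fun j _ => hterm j
    have hCbsq : (0:ℝ) ≤ ∑ j : Fin n, (Cb (Pi.single j 1))^2 :=
      Finset.sum_nonneg fun j _ => by positivity
    calc S = Real.sqrt (1 + ∑ j : Fin n, (dLine (dY j) φ z)^2) := hSdef
      _ ≤ Real.sqrt ((1 + ∑ j : Fin n, (Cb (Pi.single j 1))^2) * (jap z.1)^2) := by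
          apply Real.sqrt_le_sqrt
          have hexp : (1 + ∑ j : Fin n, (Cb (Pi.single j 1))^2) * (jap z.1)^2
              = (jap z.1)^2 + (∑ j : Fin n, (Cb (Pi.single j 1))^2) * (jap z.1)^2 := by
            ring
          rw [hexp]
          linarith [hsum2, hj2]
      _ = Real.sqrt (1 + ∑ j : Fin n, (Cb (Pi.single j 1))^2) * Real.sqrt ((jap z.1)^2) :=
          Real.sqrt_mul (by positivity) _
      _ = Real.sqrt (1 + ∑ j : Fin n, (Cb (Pi.single j 1))^2) * jap z.1 := by
          rw [Real.sqrt_sq (hjap_nonneg z.1)]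
end
end
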